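/- Let d ≥ 1, β ∈ ℝ, and let μ be a finite signed Borel measure on ℝ^d with ‖μ‖_B := sup_{t>0} t^{(d−β)/2} ‖p_t ∗ μ‖_{L^∞} < ∞. Then for every t > 0, t^{(d−β)/2} ∫_{ℝ^d} exp(−8π² t |ξ|²) |μ̂(ξ)|² dξ ≤ ‖μ‖ ‖μ‖_B. -/

import Mathlib

open MeasureTheory Real
open scoped ENNReal

noncomputable section

/-- Euclidean space `ℝ^d`. -/
abbrev Ed (d : ℕ) := EuclideanSpace ℝ (Fin d)

/-- The heat kernel `p_t(x) = (4πt)^{-d/2} exp(-|x|²/(4t))`. -/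
def heatKernel (d : ℕ) (t : ℝ) (x : Ed d) : ℝ :=
  (4 * π * t) ^ (-(d : ℝ) / 2) * Real.exp (-‖x‖ ^ 2 / (4 * t))

/-- Integral of a real function against a finite signed measure. -/
def smIntegral {d : ℕ} (ν : MeasureTheory.SignedMeasure (Ed d)) (f : Ed d → ℝ) : ℝ :=
  (∫ x, f x ∂ν.toJordanDecomposition.posPart) - ∫ x, f x ∂ν.toJordanDecomposition.negPart

/-- Heat-kernel convolution `(p_t ∗ ν)(x)` of a finite signed measure. -/
def heatConv (d : ℕ) (t : ℝ) (ν : MeasureTheory.SignedMeasure (Ed d)) (x : Ed d) : ℝ :=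
  smIntegral ν (fun y => heatKernel d t (x - y))

/-- The Fourier transform `ν̂(ξ) = ∫ exp(-2πi x·ξ) dν(x)` of a finite signed measure. -/
def fourierSM (d : ℕ) (ν : MeasureTheory.SignedMeasure (Ed d)) (ξ : Ed d) : ℂ :=
  (∫ x, Complex.exp (-(2 * π * Complex.I) * ((inner ℝ x ξ : ℝ) : ℂ)) ∂ν.toJordanDecomposition.posPart)
  - ∫ x, Complex.exp (-(2 * π * Complex.I) * ((inner ℝ x ξ : ℝ) : ℂ)) ∂ν.toJordanDecomposition.negPart

/-- The Besov `Ḃ^{β-d}_{∞,∞}` norm `sup_{t>0} t^{(d-β)/2} ‖p_t ∗ ν‖_∞`. -/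
def besovNorm (d : ℕ) (β : ℝ) (ν : MeasureTheory.SignedMeasure (Ed d)) : ℝ≥0∞ :=
  ⨆ t : {t : ℝ // 0 < t},
    ENNReal.ofReal (t.1 ^ (((d : ℝ) - β) / 2)) * eLpNorm (heatConv d t.1 ν) ⊤ volume

/-- The weak `L^p` quasinorm `sup_{λ>0} λ |{|g| > λ}|^{1/p}`. -/
def weakNorm (d : ℕ) (p : ℝ) (g : Ed d → ℂ) : ℝ≥0∞ :=
  ⨆ l : {l : ℝ // 0 < l},
    ENNReal.ofReal l.1 * (volume {ξ : Ed d | l.1 < ‖g ξ‖}) ^ (1 / p)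

/-- Total variation of a signed measure, as a real number. -/
def tv {d : ℕ} (ν : MeasureTheory.SignedMeasure (Ed d)) : ℝ :=
  (ν.totalVariation Set.univ).toReal

/-! By Fubini and the Fourier transform of the Gaussian, for finite measures `κ, η`,
`∫ e^{-8π²t|ξ|²} κ̂(ξ) conj (η̂(ξ)) dξ = ∬ p_{2t}(x - y) dκ(x) dη(y)`, and the semigroup identity
`p_t ∗ p_t = p_{2t}` rewrites the right-hand side as `∫ (p_t ∗ κ)(p_t ∗ η)`. Polarising over the
Jordan decomposition `ν = ν⁺ - ν⁻` gives `∫ e^{-8π²t|ξ|²} |ν̂(ξ)|² dξ = ‖p_t ∗ ν‖₂²`, and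
`‖f‖₂² ≤ ‖f‖_∞ ‖f‖₁` with `‖p_t ∗ ν‖₁ ≤ ‖ν‖` concludes, since `t^{(d-β)/2} ‖p_t ∗ ν‖_∞ ≤ ‖ν‖_B`. -/

open scoped RealInnerProductSpace ComplexConjugate

lemma integrable_exp_neg_mul_sq_norm {V : Type*} [NormedAddCommGroup V] [InnerProductSpace ℝ V]
    [FiniteDimensional ℝ V] [MeasurableSpace V] [BorelSpace V] {b : ℝ} (hb : 0 < b) :
    Integrable (fun x : V => Real.exp (-b * ‖x‖ ^ 2)) := by
  refine (GaussianFourier.integrable_cexp_neg_mul_sq_norm_add (V := V) (b := b)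
    (by simpa using hb) 0 0).norm.congr (.of_forall fun x => ?_)
  simp only [zero_mul, add_zero, Complex.norm_exp]
  norm_cast

lemma integral_sub_sub_add {α E : Type*} [MeasurableSpace α] {μ : Measure α}
    [NormedAddCommGroup E] [NormedSpace ℝ E] {f₁ f₂ f₃ f₄ : α → E} (h₁ : Integrable f₁ μ)
    (h₂ : Integrable f₂ μ) (h₃ : Integrable f₃ μ) (h₄ : Integrable f₄ μ) :
    ∫ x, (f₁ x - f₂ x - f₃ x + f₄ x) ∂μ
      = (∫ x, f₁ x ∂μ) - (∫ x, f₂ x ∂μ) - (∫ x, f₃ x ∂μ) + ∫ x, f₄ x ∂μ := by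
  have h₁₂ : Integrable (fun x => f₁ x - f₂ x) μ := h₁.sub h₂
  have h₁₂₃ : Integrable (fun x => f₁ x - f₂ x - f₃ x) μ := h₁₂.sub h₃
  rw [integral_add h₁₂₃ h₄, integral_sub h₁₂ h₃, integral_sub h₁ h₂]

lemma lintegral_ofReal_sq_le_eLpNorm_top_mul_eLpNorm_one {α : Type*} [MeasurableSpace α]
    {μ : Measure α} {f : α → ℝ} (hf : AEStronglyMeasurable f μ) :
    ∫⁻ x, ENNReal.ofReal (f x ^ 2) ∂μ ≤ eLpNorm f ⊤ μ * eLpNorm f 1 μ := by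
  have h := eLpNorm_smul_le_eLpNorm_top_mul_eLpNorm 1 hf f
  rw [eLpNorm_one_eq_lintegral_enorm] at h
  refine le_of_eq_of_le (lintegral_congr fun x => ?_) h
  rw [Pi.smul_apply', smul_eq_mul, Real.enorm_eq_ofReal_abs, abs_mul_self, sq]

lemma norm_sub_sq_add_norm_sub_sq {E : Type*} [NormedAddCommGroup E] [InnerProductSpace ℝ E]
    (x y z : E) :
    ‖x - z‖ ^ 2 + ‖z - y‖ ^ 2 = ‖x - y‖ ^ 2 / 2 + 2 * ‖z - (2 : ℝ)⁻¹ • (x + y)‖ ^ 2 := by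
  have h := parallelogram_law_with_norm ℝ ((2 : ℝ)⁻¹ • (x - y)) (z - (2 : ℝ)⁻¹ • (x + y))
  rw [norm_smul, show (2 : ℝ)⁻¹ • (x - y) + (z - (2 : ℝ)⁻¹ • (x + y)) = z - y by module,
    show (2 : ℝ)⁻¹ • (x - y) - (z - (2 : ℝ)⁻¹ • (x + y)) = x - z by module] at h
  rw [Real.norm_of_nonneg (by norm_num)] at h
  linear_combination h

lemma charFun_mul_conj_charFun {E : Type*} [NormedAddCommGroup E] [InnerProductSpace ℝ E]
    [MeasurableSpace E] (κ η : Measure E) [SFinite κ] [SFinite η] (s : E) :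
    charFun κ s * conj (charFun η s)
      = ∫ p, Complex.exp (⟪p.1 - p.2, s⟫ * Complex.I) ∂(κ.prod η) := by
  rw [← charFun_neg, charFun_apply, charFun_apply, ← integral_prod_mul]
  congr 1 with p
  rw [← Complex.exp_add, inner_sub_left, inner_neg_right]
  push_cast; ring_nf

section

variable {d : ℕ} {t : ℝ}

lemma heatKernel_nonneg (ht : 0 < t) (x : Ed d) : 0 ≤ heatKernel d t x := by
  unfold heatKernel; positivity

lemma heatKernel_le (ht : 0 < t) (x : Ed d) :
    heatKernel d t x ≤ (4 * π * t) ^ (-(d : ℝ) / 2) := by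
  unfold heatKernel
  refine mul_le_of_le_one_right (by positivity) (Real.exp_le_one_iff.2 ?_)
  have : 0 ≤ ‖x‖ ^ 2 / (4 * t) := by positivity
  rw [neg_div]; linarith

@[fun_prop]
lemma continuous_heatKernel : Continuous (heatKernel d t) := by
  unfold heatKernel; fun_prop

lemma heatKernel_eq_gaussian (x : Ed d) :
    heatKernel d t x = (4 * π * t) ^ (-(d : ℝ) / 2) * Real.exp (-(4 * t)⁻¹ * ‖x‖ ^ 2) := by
  unfold heatKernel; congr 2; ring

lemma integrable_heatKernel (ht : 0 < t) : Integrable (heatKernel d t) := by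
  simp_rw [funext heatKernel_eq_gaussian]
  exact (integrable_exp_neg_mul_sq_norm (by positivity)).const_mul _

lemma integral_heatKernel (ht : 0 < t) : ∫ x, heatKernel d t x = 1 := by
  simp_rw [heatKernel_eq_gaussian]
  rw [integral_const_mul,
    GaussianFourier.integral_rexp_neg_mul_sq_norm (inv_pos.2 (by positivity : 0 < 4 * t)),
    finrank_euclideanSpace_fin, div_inv_eq_mul, show π * (4 * t) = 4 * π * t by ring, neg_div,
    ← Real.rpow_add (by positivity), neg_add_cancel, Real.rpow_zero]

lemma heatKernel_sub_comm (x y : Ed d) : heatKernel d t (x - y) = heatKernel d t (y - x) := by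
  rw [heatKernel, heatKernel, norm_sub_rev]

lemma heatKernel_mul_heatKernel (ht : 0 < t) (x y z : Ed d) :
    heatKernel d t (x - z) * heatKernel d t (z - y)
      = heatKernel d (2 * t) (x - y) * heatKernel d (t / 2) (z - (2 : ℝ)⁻¹ • (x + y)) := by
  have hconst : (4 * π * t) ^ (-(d : ℝ) / 2) * (4 * π * t) ^ (-(d : ℝ) / 2)
      = (4 * π * (2 * t)) ^ (-(d : ℝ) / 2) * (4 * π * (t / 2)) ^ (-(d : ℝ) / 2) := by
    rw [← Real.mul_rpow (by positivity) (by positivity),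
      ← Real.mul_rpow (by positivity) (by positivity)]
    ring_nf
  have hexp : -‖x - z‖ ^ 2 / (4 * t) + -‖z - y‖ ^ 2 / (4 * t)
      = -‖x - y‖ ^ 2 / (4 * (2 * t)) + -‖z - (2 : ℝ)⁻¹ • (x + y)‖ ^ 2 / (4 * (t / 2)) := by
    have := norm_sub_sq_add_norm_sub_sq x y z
    set m := z - (2 : ℝ)⁻¹ • (x + y)
    field_simp
    linear_combination (-2) * this
  simp only [heatKernel]
  calc _ = (4 * π * t) ^ (-(d : ℝ) / 2) * (4 * π * t) ^ (-(d : ℝ) / 2)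
        * Real.exp (-‖x - z‖ ^ 2 / (4 * t) + -‖z - y‖ ^ 2 / (4 * t)) := by
        rw [Real.exp_add]; ring
    _ = _ := by rw [hconst, hexp, Real.exp_add]; ring

lemma integral_heatKernel_mul_heatKernel (ht : 0 < t) (x y : Ed d) :
    ∫ z, heatKernel d t (x - z) * heatKernel d t (z - y) = heatKernel d (2 * t) (x - y) := by
  simp_rw [heatKernel_mul_heatKernel ht, integral_const_mul,
    integral_sub_right_eq_self (heatKernel d (t / 2)), integral_heatKernel (half_pos ht), mul_one]

lemma integral_gaussian_mul_cexp_inner (ht : 0 < t) (w : Ed d) :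
    ∫ ξ : Ed d, (Real.exp (-(8 * π ^ 2 * t) * ‖ξ‖ ^ 2) : ℂ)
        * Complex.exp (⟪w, -(2 * π) • ξ⟫ * Complex.I) = heatKernel d (2 * t) w := by
  have hb : 0 < ((8 * π ^ 2 * t : ℝ) : ℂ).re := by rw [Complex.ofReal_re]; positivity
  have hπ : (π : ℂ) ≠ 0 := Complex.ofReal_ne_zero.2 pi_ne_zero
  have ht' : (t : ℂ) ≠ 0 := Complex.ofReal_ne_zero.2 ht.ne'
  have hintegrand : ∀ ξ : Ed d, (Real.exp (-(8 * π ^ 2 * t) * ‖ξ‖ ^ 2) : ℂ)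
      * Complex.exp (⟪w, -(2 * π) • ξ⟫ * Complex.I)
      = Complex.exp (-((8 * π ^ 2 * t : ℝ) : ℂ) * ‖ξ‖ ^ 2 + (-2 * π * Complex.I) * ⟪w, ξ⟫) := by
    intro ξ
    rw [Complex.ofReal_exp, ← Complex.exp_add, inner_smul_right]
    push_cast; ring_nf
  have hscale : (π : ℂ) / ((8 * π ^ 2 * t : ℝ) : ℂ) = ((4 * π * (2 * t))⁻¹ : ℝ) := by
    push_cast; field_simp; ring
  have hexp : (-2 * π * Complex.I) ^ 2 * (‖w‖ : ℂ) ^ 2 / (4 * ((8 * π ^ 2 * t : ℝ) : ℂ))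
      = ((-‖w‖ ^ 2 / (4 * (2 * t)) : ℝ) : ℂ) := by
    push_cast; field_simp; rw [Complex.I_sq]; ring
  simp_rw [hintegrand]
  rw [GaussianFourier.integral_cexp_neg_mul_sq_norm_add hb, finrank_euclideanSpace_fin, hscale,
    hexp, show ((d : ℂ) / 2) = (((d : ℝ) / 2 : ℝ) : ℂ) by push_cast; rfl,
    ← Complex.ofReal_cpow (by positivity), ← Complex.ofReal_exp, ← Complex.ofReal_mul,
    Real.inv_rpow (by positivity), ← Real.rpow_neg (by positivity), ← neg_div]
  rfl

def heatConvMeasure (d : ℕ) (t : ℝ) (κ : Measure (Ed d)) (z : Ed d) : ℝ :=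
  ∫ x, heatKernel d t (z - x) ∂κ

lemma heatConvMeasure_nonneg (κ : Measure (Ed d)) (ht : 0 < t) (z : Ed d) :
    0 ≤ heatConvMeasure d t κ z :=
  integral_nonneg fun _ => heatKernel_nonneg ht _

section FiniteMeasure

variable (κ η : Measure (Ed d)) [IsFiniteMeasure κ] [IsFiniteMeasure η]

lemma integrable_heatKernel_sub (ht : 0 < t) (z : Ed d) :
    Integrable (fun x => heatKernel d t (z - x)) κ :=
  .of_bound (continuous_heatKernel.comp (continuous_const.sub continuous_id)).aestronglyMeasurable
    ((4 * π * t) ^ (-(d : ℝ) / 2)) (.of_forall fun x => by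
      rw [Real.norm_of_nonneg (heatKernel_nonneg ht _)]; exact heatKernel_le ht _)

lemma heatConvMeasure_le (ht : 0 < t) (z : Ed d) :
    heatConvMeasure d t κ z ≤ (4 * π * t) ^ (-(d : ℝ) / 2) * κ.real Set.univ := by
  calc heatConvMeasure d t κ z ≤ ∫ _, (4 * π * t) ^ (-(d : ℝ) / 2) ∂κ :=
        integral_mono (integrable_heatKernel_sub κ ht z) (integrable_const _)
          fun x => heatKernel_le ht _
    _ = _ := by rw [integral_const, smul_eq_mul, mul_comm]

lemma integrable_uncurry_heatKernel_sub (ht : 0 < t) :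
    Integrable (Function.uncurry fun x z : Ed d => heatKernel d t (z - x)) (κ.prod volume) := by
  have hmeas : AEStronglyMeasurable (Function.uncurry fun x z : Ed d => heatKernel d t (z - x))
      (κ.prod volume) :=
    (continuous_heatKernel.comp (continuous_snd.sub continuous_fst)).aestronglyMeasurable
  refine (integrable_prod_iff hmeas).2
    ⟨.of_forall fun x => (integrable_heatKernel ht).comp_sub_right x, ?_⟩
  have h : ∀ x : Ed d, ∫ z, ‖heatKernel d t (z - x)‖ = 1 := fun x => by
    simp_rw [Real.norm_of_nonneg (heatKernel_nonneg ht _),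
      integral_sub_right_eq_self (heatKernel d t), integral_heatKernel ht]
  simpa only [Function.uncurry_apply_pair, h] using integrable_const (μ := κ) (1 : ℝ)

lemma integrable_heatConvMeasure (ht : 0 < t) : Integrable (heatConvMeasure d t κ) :=
  (integrable_uncurry_heatKernel_sub κ ht).integral_prod_right

lemma integral_heatConvMeasure (ht : 0 < t) :
    ∫ z, heatConvMeasure d t κ z = κ.real Set.univ := by
  unfold heatConvMeasure
  rw [← integral_integral_swap (integrable_uncurry_heatKernel_sub κ ht)]
  simp_rw [integral_sub_right_eq_self (heatKernel d t), integral_heatKernel ht, integral_const,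
    smul_eq_mul, mul_one]

lemma eLpNorm_one_heatConvMeasure (ht : 0 < t) :
    eLpNorm (heatConvMeasure d t κ) 1 volume = κ Set.univ := by
  rw [eLpNorm_one_eq_lintegral_enorm]
  simp_rw [Real.enorm_of_nonneg (heatConvMeasure_nonneg κ ht _)]
  rw [← ofReal_integral_eq_lintegral_ofReal (integrable_heatConvMeasure κ ht)
    (.of_forall (heatConvMeasure_nonneg κ ht)), integral_heatConvMeasure κ ht, ofReal_measureReal]

lemma integrable_heatConvMeasure_mul (ht : 0 < t) :
    Integrable (fun z => heatConvMeasure d t κ z * heatConvMeasure d t η z) :=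
  (integrable_heatConvMeasure η ht).bdd_mul (integrable_heatConvMeasure κ ht).aestronglyMeasurable
    (c := (4 * π * t) ^ (-(d : ℝ) / 2) * κ.real Set.univ) (.of_forall fun z => by
      rw [Real.norm_of_nonneg (heatConvMeasure_nonneg κ ht z)]; exact heatConvMeasure_le κ ht z)

lemma integrable_heatKernel_mul_heatKernel_prod (ht : 0 < t) :
    Integrable (Function.uncurry fun (p : Ed d × Ed d) (z : Ed d) =>
      heatKernel d t (p.1 - z) * heatKernel d t (z - p.2)) ((κ.prod η).prod volume) := by
  have hmeas : AEStronglyMeasurable (Function.uncurry fun (p : Ed d × Ed d) (z : Ed d) =>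
      heatKernel d t (p.1 - z) * heatKernel d t (z - p.2)) ((κ.prod η).prod volume) := by
    apply Continuous.aestronglyMeasurable
    unfold Function.uncurry
    fun_prop
  refine (integrable_prod_iff hmeas).2 ⟨.of_forall fun p => ?_, ?_⟩
  · simp only [Function.uncurry_apply_pair]
    exact ((integrable_heatKernel ht).comp_sub_right p.2).bdd_mul
      (continuous_heatKernel.comp (continuous_const.sub continuous_id)).aestronglyMeasurable
        (c := (4 * π * t) ^ (-(d : ℝ) / 2)) (.of_forall fun z => by
          rw [Real.norm_of_nonneg (heatKernel_nonneg ht _)]; exact heatKernel_le ht _)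
  · have h : ∀ p : Ed d × Ed d, ∫ z, ‖heatKernel d t (p.1 - z) * heatKernel d t (z - p.2)‖
        = heatKernel d (2 * t) (p.1 - p.2) := fun p => by
      simp_rw [Real.norm_of_nonneg (mul_nonneg (heatKernel_nonneg ht _)
        (heatKernel_nonneg ht _)), integral_heatKernel_mul_heatKernel ht]
    simp only [Function.uncurry_apply_pair, h]
    exact .of_bound (continuous_heatKernel.comp
      (continuous_fst.sub continuous_snd)).aestronglyMeasurable
      ((4 * π * (2 * t)) ^ (-(d : ℝ) / 2)) (.of_forall fun p => by
        rw [Real.norm_of_nonneg (heatKernel_nonneg (by positivity) _)]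
        exact heatKernel_le (by positivity) _)

lemma integral_heatKernel_sub_prod (ht : 0 < t) :
    ∫ p, heatKernel d (2 * t) (p.1 - p.2) ∂(κ.prod η)
      = ∫ z, heatConvMeasure d t κ z * heatConvMeasure d t η z := by
  simp_rw [← integral_heatKernel_mul_heatKernel ht]
  rw [integral_integral_swap (integrable_heatKernel_mul_heatKernel_prod κ η ht)]
  congr 1 with z
  simp_rw [heatKernel_sub_comm _ z]
  exact integral_prod_mul (fun x => heatKernel d t (z - x)) (fun y => heatKernel d t (z - y))

lemma integral_gaussian_mul_charFun_mul_conj (ht : 0 < t) :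
    ∫ ξ : Ed d, (Real.exp (-(8 * π ^ 2 * t) * ‖ξ‖ ^ 2) : ℂ)
        * (charFun κ (-(2 * π) • ξ) * conj (charFun η (-(2 * π) • ξ)))
      = ((∫ p, heatKernel d (2 * t) (p.1 - p.2) ∂(κ.prod η) : ℝ) : ℂ) := by
  simp_rw [charFun_mul_conj_charFun, ← integral_const_mul]
  have hint : Integrable (Function.uncurry fun (ξ : Ed d) (p : Ed d × Ed d) =>
      (Real.exp (-(8 * π ^ 2 * t) * ‖ξ‖ ^ 2) : ℂ)
        * Complex.exp (⟪p.1 - p.2, -(2 * π) • ξ⟫ * Complex.I)) (volume.prod (κ.prod η)) := by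
    refine ((integrable_exp_neg_mul_sq_norm (by positivity : 0 < 8 * π ^ 2 * t)).mul_prod
      (integrable_const (1 : ℝ))).mono' (by unfold Function.uncurry; fun_prop)
      (.of_forall fun q => ?_)
    rw [Function.uncurry_apply_pair, norm_mul, Complex.norm_real, Complex.norm_exp_ofReal_mul_I,
      Real.norm_of_nonneg (Real.exp_nonneg _)]
  rw [integral_integral_swap hint]
  simp_rw [integral_gaussian_mul_cexp_inner ht]
  exact integral_ofReal

lemma integrable_gaussian_mul_charFun_mul_conj (ht : 0 < t) :
    Integrable fun ξ : Ed d => (Real.exp (-(8 * π ^ 2 * t) * ‖ξ‖ ^ 2) : ℂ)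
        * (charFun κ (-(2 * π) • ξ) * conj (charFun η (-(2 * π) • ξ))) := by
  refine ((integrable_exp_neg_mul_sq_norm (by positivity : 0 < 8 * π ^ 2 * t)).mul_const
    (κ.real Set.univ * η.real Set.univ)).mono' (by fun_prop) (.of_forall fun ξ => ?_)
  rw [norm_mul, norm_mul, Complex.norm_real, RCLike.norm_conj,
    Real.norm_of_nonneg (Real.exp_nonneg _)]
  gcongr
  · exact norm_charFun_le _
  · exact norm_charFun_le _

lemma integrable_gaussian_mul_norm_charFun_sub_sq (ht : 0 < t) :
    Integrable fun ξ : Ed d => Real.exp (-(8 * π ^ 2 * t) * ‖ξ‖ ^ 2)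
        * ‖charFun κ (-(2 * π) • ξ) - charFun η (-(2 * π) • ξ)‖ ^ 2 := by
  refine ((integrable_exp_neg_mul_sq_norm (by positivity : 0 < 8 * π ^ 2 * t)).mul_const
    ((κ.real Set.univ + η.real Set.univ) ^ 2)).mono' (by fun_prop) (.of_forall fun ξ => ?_)
  rw [norm_mul, norm_pow, norm_norm, Real.norm_of_nonneg (Real.exp_nonneg _)]
  gcongr
  exact (norm_sub_le _ _).trans (add_le_add (norm_charFun_le _) (norm_charFun_le _))

lemma integrable_heatConvMeasure_sub_sq (ht : 0 < t) :
    Integrable fun z => (heatConvMeasure d t κ z - heatConvMeasure d t η z) ^ 2 :=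
  ((((integrable_heatConvMeasure_mul κ κ ht).sub (integrable_heatConvMeasure_mul κ η ht)).sub
    (integrable_heatConvMeasure_mul η κ ht)).add (integrable_heatConvMeasure_mul η η ht)).congr
    (.of_forall fun z => by simp only [Pi.add_apply, Pi.sub_apply]; ring)

lemma integral_gaussian_mul_norm_charFun_sub_sq (ht : 0 < t) :
    ∫ ξ : Ed d, Real.exp (-(8 * π ^ 2 * t) * ‖ξ‖ ^ 2)
        * ‖charFun κ (-(2 * π) • ξ) - charFun η (-(2 * π) • ξ)‖ ^ 2
      = ∫ z, (heatConvMeasure d t κ z - heatConvMeasure d t η z) ^ 2 := by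
  set B : Measure (Ed d) → Measure (Ed d) → Ed d → ℂ := fun κ η ξ =>
    (Real.exp (-(8 * π ^ 2 * t) * ‖ξ‖ ^ 2) : ℂ)
      * (charFun κ (-(2 * π) • ξ) * conj (charFun η (-(2 * π) • ξ)))
  have hB (κ η : Measure (Ed d)) [IsFiniteMeasure κ] [IsFiniteMeasure η] :
      ∫ ξ, B κ η ξ = ((∫ z, heatConvMeasure d t κ z * heatConvMeasure d t η z : ℝ) : ℂ) := by
    rw [integral_gaussian_mul_charFun_mul_conj κ η ht, integral_heatKernel_sub_prod κ η ht]
  set P := heatConvMeasure d t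
  apply Complex.ofReal_injective
  calc _ = ∫ ξ, (B κ κ ξ - B κ η ξ - B η κ ξ + B η η ξ) := by
        rw [← integral_complex_ofReal]
        congr 1 with ξ
        rw [Complex.ofReal_mul, Complex.ofReal_pow, ← Complex.mul_conj', map_sub]
        ring
    _ = (((∫ z, P κ z * P κ z) - (∫ z, P κ z * P η z) - (∫ z, P η z * P κ z)
          + ∫ z, P η z * P η z : ℝ) : ℂ) := by
        rw [integral_sub_sub_add (integrable_gaussian_mul_charFun_mul_conj κ κ ht)
          (integrable_gaussian_mul_charFun_mul_conj κ η ht)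
          (integrable_gaussian_mul_charFun_mul_conj η κ ht)
          (integrable_gaussian_mul_charFun_mul_conj η η ht), hB, hB, hB, hB]
        push_cast; rfl
    _ = _ := by
        rw [← integral_sub_sub_add (integrable_heatConvMeasure_mul κ κ ht)
          (integrable_heatConvMeasure_mul κ η ht) (integrable_heatConvMeasure_mul η κ ht)
          (integrable_heatConvMeasure_mul η η ht)]
        congr 2 with z
        ring

end FiniteMeasure

section SignedMeasure

variable (ν : SignedMeasure (Ed d))

lemma heatConv_eq_sub : heatConv d t ν = heatConvMeasure d t ν.toJordanDecomposition.posPart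
    - heatConvMeasure d t ν.toJordanDecomposition.negPart := rfl

lemma fourierSM_eq_sub_charFun (ξ : Ed d) :
    fourierSM d ν ξ = charFun ν.toJordanDecomposition.posPart (-(2 * π) • ξ)
      - charFun ν.toJordanDecomposition.negPart (-(2 * π) • ξ) := by
  simp only [fourierSM, charFun_apply, inner_smul_right]
  congr 1 <;> congr 1 with x <;> push_cast <;> ring_nf

lemma eLpNorm_one_heatConv_le (ht : 0 < t) :
    eLpNorm (heatConv d t ν) 1 volume ≤ ν.totalVariation Set.univ := by
  rw [heatConv_eq_sub]
  refine (eLpNorm_sub_le (integrable_heatConvMeasure _ ht).aestronglyMeasurable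
    (integrable_heatConvMeasure _ ht).aestronglyMeasurable le_rfl).trans_eq ?_
  rw [eLpNorm_one_heatConvMeasure _ ht, eLpNorm_one_heatConvMeasure _ ht]
  rfl

lemma lintegral_gaussian_mul_norm_fourierSM_sq_le (ht : 0 < t) :
    ∫⁻ ξ : Ed d, ENNReal.ofReal (Real.exp (-(8 * π ^ 2 * t) * ‖ξ‖ ^ 2) * ‖fourierSM d ν ξ‖ ^ 2)
      ≤ eLpNorm (heatConv d t ν) ⊤ volume * ν.totalVariation Set.univ := by
  simp_rw [fourierSM_eq_sub_charFun]
  rw [← ofReal_integral_eq_lintegral_ofReal (integrable_gaussian_mul_norm_charFun_sub_sq _ _ ht)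
      (.of_forall fun _ => by positivity),
    integral_gaussian_mul_norm_charFun_sub_sq _ _ ht,
    ofReal_integral_eq_lintegral_ofReal (integrable_heatConvMeasure_sub_sq _ _ ht)
      (.of_forall fun _ => by positivity)]
  have hmeas : AEStronglyMeasurable (heatConv d t ν) volume :=
    ((integrable_heatConvMeasure _ ht).sub (integrable_heatConvMeasure _ ht)).aestronglyMeasurable
  refine (lintegral_ofReal_sq_le_eLpNorm_top_mul_eLpNorm_one hmeas).trans ?_
  gcongr
  exact eLpNorm_one_heatConv_le ν ht

end SignedMeasure

end

theorem stmt16_general (d : ℕ) (β : ℝ) (ν : MeasureTheory.SignedMeasure (Ed d))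
    (t : ℝ) (ht : 0 < t) :
    ENNReal.ofReal (t ^ (((d : ℝ) - β) / 2)) *
        ∫⁻ ξ : Ed d, ENNReal.ofReal
          (Real.exp (-(8 * π ^ 2 * t) * ‖ξ‖ ^ 2) * ‖fourierSM d ν ξ‖ ^ 2)
      ≤ ν.totalVariation Set.univ * besovNorm d β ν := by
  calc _ ≤ ENNReal.ofReal (t ^ (((d : ℝ) - β) / 2))
        * (eLpNorm (heatConv d t ν) ⊤ volume * ν.totalVariation Set.univ) := by
        gcongr; exact lintegral_gaussian_mul_norm_fourierSM_sq_le ν ht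
    _ = ν.totalVariation Set.univ * (ENNReal.ofReal (t ^ (((d : ℝ) - β) / 2))
        * eLpNorm (heatConv d t ν) ⊤ volume) := by ring
    _ ≤ _ := by
        gcongr
        exact le_iSup_of_le (⟨t, ht⟩ : {s : ℝ // 0 < s}) le_rfl

/-- If `μ` is a finite signed measure on `ℝ^d` with
`‖μ‖_B = sup_{t>0} t^{(d-β)/2}‖p_t ∗ μ‖_∞ < ∞`, then for every `t > 0`,
`t^{(d-β)/2} ∫ exp(-8π²t|ξ|²) |μ̂(ξ)|² dξ ≤ ‖μ‖ ‖μ‖_B`. -/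
theorem stmt16 (d : ℕ) (hd : 1 ≤ d) (β : ℝ) (ν : MeasureTheory.SignedMeasure (Ed d))
    (hB : besovNorm d β ν ≠ ⊤) (t : ℝ) (ht : 0 < t) :
    ENNReal.ofReal (t ^ (((d : ℝ) - β) / 2)) *
        ∫⁻ ξ : Ed d, ENNReal.ofReal
          (Real.exp (-(8 * π ^ 2 * t) * ‖ξ‖ ^ 2) * ‖fourierSM d ν ξ‖ ^ 2)
      ≤ ν.totalVariation Set.univ * besovNorm d β ν :=
  stmt16_general d β ν t ht
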